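/- For 1 ≤ p ≤ q ≤ ∞ and Boyd functions φ₁,...,φₙ satisfying (𝓗₂), the embedding K_p^{φ₁,...,φₙ}(A) ↪ K_q^{φ₁,...,φₙ}(A) holds continuously. -/

import Mathlib

open Real Set MeasureTheory
open scoped ENNReal

noncomputable def boydBar (φ : ℝ → ℝ) (t : ℝ) : ℝ :=
  sSup {x : ℝ | ∃ s : ℝ, 0 < s ∧ x = φ (t * s) / φ s}

structure IsBoyd (φ : ℝ → ℝ) : Prop where
  pos : ∀ t : ℝ, 0 < t → 0 < φ t
  one : φ 1 = 1
  cont : ContinuousOn φ (Set.Ioi 0)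
  fin : ∀ t : ℝ, 0 < t → BddAbove {x : ℝ | ∃ s : ℝ, 0 < s ∧ x = φ (t * s) / φ s}

noncomputable def lowerBoydIndex (φ : ℝ → ℝ) : ℝ :=
  sSup {x : ℝ | ∃ t ∈ Set.Ioo (0:ℝ) 1, x = Real.log (boydBar φ t) / Real.log t}

noncomputable def upperBoydIndex (φ : ℝ → ℝ) : ℝ :=
  sInf {x : ℝ | ∃ t ∈ Set.Ioi (1:ℝ), x = Real.log (boydBar φ t) / Real.log t}

/-- The multi-parameter K-functional of a tuple of Banach spaces `E j` continuously
embedded into a common topological vector space `𝒜` via `ι j`. -/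
noncomputable def Kfun {𝒜 : Type*} [AddCommGroup 𝒜] [Module ℝ 𝒜] [TopologicalSpace 𝒜]
    {m : ℕ} {E : Fin m → Type*} [∀ j, NormedAddCommGroup (E j)] [∀ j, NormedSpace ℝ (E j)]
    (ι : ∀ j, E j →L[ℝ] 𝒜) (t : Fin m → ℝ) (a : 𝒜) : ℝ :=
  sInf {x : ℝ | ∃ v : ∀ j, E j, a = ∑ j, ι j (v j) ∧ x = ∑ j, t j * ‖v j‖}

/-- The Haar-type measure `dt₁/t₁ ⋯ dtₙ/tₙ` on the positive orthant of `(0,∞)ⁿ`. -/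
noncomputable def haarMeas (n : ℕ) : Measure (Fin n → ℝ) :=
  ((MeasureTheory.Measure.pi fun _ => (volume : Measure ℝ)).restrict
      {t : Fin n → ℝ | ∀ j, 0 < t j}).withDensity
    (fun t => ENNReal.ofReal (∏ j, (t j)⁻¹))

/-- The (quasi-)norm of the multi-parameter interpolation space `K_p^{φ₁,…,φₙ}(A)`. -/
noncomputable def Knorm {𝒜 : Type*} [AddCommGroup 𝒜] [Module ℝ 𝒜] [TopologicalSpace 𝒜]
    {n : ℕ} {E : Fin (n + 1) → Type*} [∀ j, NormedAddCommGroup (E j)]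
    [∀ j, NormedSpace ℝ (E j)]
    (ι : ∀ j, E j →L[ℝ] 𝒜) (φ : Fin n → ℝ → ℝ) (p : ℝ≥0∞) (a : 𝒜) : ℝ≥0∞ :=
  eLpNorm (fun t : Fin n → ℝ => Kfun ι (Fin.cons 1 t) a / ∏ j, φ j (t j)) p (haarMeas n)

/-- Condition `(𝓗₁)`. -/
def CondH1 {n : ℕ} (φ : Fin n → ℝ → ℝ) (p : ℝ≥0∞) : Prop :=
  eLpNorm (fun t : Fin n → ℝ => min 1 (⨅ j, t j) / ∏ j, φ j (t j)) p (haarMeas n) < ⊤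

section KMonoAux

lemma IsBoyd.le_boydBar {φ : ℝ → ℝ} (hφ : IsBoyd φ) {t s : ℝ} (ht : 0 < t) (hs : 0 < s) :
    φ (t * s) / φ s ≤ boydBar φ t :=
  le_csSup (hφ.fin t ht) ⟨s, hs, rfl⟩

lemma IsBoyd.boydBar_pos {φ : ℝ → ℝ} (hφ : IsBoyd φ) {t : ℝ} (ht : 0 < t) :
    0 < boydBar φ t := by
  have h := hφ.le_boydBar ht one_pos
  rw [hφ.one, mul_one, div_one] at h
  exact (hφ.pos t ht).trans_le h

lemma IsBoyd.phi_le {φ : ℝ → ℝ} (hφ : IsBoyd φ) {t s : ℝ} (ht : 0 < t) (hs : 0 < s) :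
    φ (t * s) ≤ boydBar φ t * φ s :=
  (div_le_iff₀ (hφ.pos s hs)).mp (hφ.le_boydBar ht hs)

/-- measurable ENNReal-valued version of `boydBar` (agrees with it on `Ioi 0`). -/
noncomputable def bbE (φ : ℝ → ℝ) (t : ℝ) : ℝ≥0∞ :=
  ⨆ q : {q : ℚ // 0 < q},
    ENNReal.ofReal (if _ : t ∈ Ioi (0:ℝ) then φ (t * (q.1 : ℝ)) / φ (q.1 : ℝ) else 0)

lemma measurable_aux {φ : ℝ → ℝ} (hφ : IsBoyd φ) {c : ℝ} (hc : 0 < c) :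
    Measurable fun t : ℝ => if _ : t ∈ Ioi (0:ℝ) then φ (t * c) / φ c else 0 := by
  have hcont : Continuous fun x : Ioi (0:ℝ) => φ ((x : ℝ) * c) / φ c := by
    apply Continuous.div_const
    have := hφ.cont.comp_continuous
      ((continuous_subtype_val (p := fun x : ℝ => x ∈ Ioi (0:ℝ))).mul continuous_const)
      (fun x : Ioi (0:ℝ) => mem_Ioi.mpr (mul_pos x.2 hc))
    exact this
  exact Measurable.dite (f := fun x : Ioi (0:ℝ) => φ ((x:ℝ) * c) / φ c) (g := fun _ => (0:ℝ))
    hcont.measurable measurable_const measurableSet_Ioi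

lemma measurable_bbE {φ : ℝ → ℝ} (hφ : IsBoyd φ) : Measurable (bbE φ) :=
  Measurable.iSup fun q =>
    ENNReal.measurable_ofReal.comp (measurable_aux hφ (by exact_mod_cast q.2))

lemma bbE_eq {φ : ℝ → ℝ} (hφ : IsBoyd φ) {t : ℝ} (ht : 0 < t) :
    bbE φ t = ENNReal.ofReal (boydBar φ t) := by
  apply le_antisymm
  · refine iSup_le fun q => ?_
    have hq : (0:ℝ) < (q.1 : ℝ) := by exact_mod_cast q.2
    rw [dif_pos (mem_Ioi.mpr ht)]
    exact ENNReal.ofReal_le_ofReal (hφ.le_boydBar ht hq)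
  · have hS : {x : ℝ | ∃ s, 0 < s ∧ x = φ (t * s) / φ s}.Nonempty := ⟨_, 1, one_pos, rfl⟩
    have hmap := Monotone.map_csSup_of_continuousAt (f := ENNReal.ofReal)
      ENNReal.continuous_ofReal.continuousAt (fun a b h => ENNReal.ofReal_le_ofReal h)
      hS (hφ.fin t ht)
    rw [boydBar, hmap]
    refine csSup_le (hS.image _) ?_
    rintro x ⟨y, ⟨s, hs, rfl⟩, rfl⟩
    -- rational approximation from below
    have hchoice : ∀ k : ℕ, ∃ q : ℚ, max (s - 1/(k+1:ℝ)) (s/2) < (q:ℝ) ∧ (q:ℝ) < s := by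
      intro k
      apply exists_rat_btwn
      apply max_lt
      · have : 0 < 1/(k+1:ℝ) := by positivity
        linarith
      · linarith
    choose u hu1 hu2 using hchoice
    have hupos : ∀ k, 0 < (u k : ℝ) := fun k => lt_of_lt_of_le (by linarith : (0:ℝ) < s/2) (((le_max_right _ _).trans (hu1 k).le))
    have hlim : Filter.Tendsto (fun k => (u k : ℝ)) Filter.atTop (nhds s) := by
      apply tendsto_of_tendsto_of_tendsto_of_le_of_le
        (g := fun k : ℕ => max (s - 1/(k+1:ℝ)) (s/2)) (h := fun _ : ℕ => s)
      · have h1 : Filter.Tendsto (fun k : ℕ => s - 1/(k+1:ℝ)) Filter.atTop (nhds (s - 0)) :=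
          Filter.Tendsto.const_sub s tendsto_one_div_add_atTop_nhds_zero_nat
        rw [sub_zero] at h1
        have h2 := h1.max (tendsto_const_nhds (x := s/2) (f := Filter.atTop (α := ℕ)))
        rwa [max_eq_left (by linarith : s/2 ≤ s)] at h2
      · exact tendsto_const_nhds
      · exact fun k => (hu1 k).le
      · exact fun k => (hu2 k).le
    have hratio : ContinuousOn (fun v : ℝ => φ (t * v) / φ v) (Ioi 0) := by
      apply ContinuousOn.div
      · exact hφ.cont.comp (continuous_const.mul continuous_id).continuousOn
          (fun v hv => mem_Ioi.mpr (mul_pos ht hv))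
      · exact hφ.cont
      · exact fun v hv => (hφ.pos v hv).ne'
    have htend : Filter.Tendsto (fun k => ENNReal.ofReal (φ (t * (u k : ℝ)) / φ (u k : ℝ)))
        Filter.atTop (nhds (ENNReal.ofReal (φ (t * s) / φ s))) := by
      apply (ENNReal.continuous_ofReal.tendsto _).comp
      apply ((hratio s hs).tendsto).comp
      exact tendsto_nhdsWithin_of_tendsto_nhds_of_eventually_within _ hlim
        (Filter.Eventually.of_forall fun k => mem_Ioi.mpr (hupos k))
    refine le_of_tendsto htend (Filter.Eventually.of_forall fun k => ?_)
    have hk : 0 < u k := by exact_mod_cast hupos k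
    refine le_iSup_of_le ⟨u k, hk⟩ ?_
    rw [dif_pos (mem_Ioi.mpr ht)]


section KfunLemmas

variable {𝒜 : Type*} [AddCommGroup 𝒜] [Module ℝ 𝒜] [TopologicalSpace 𝒜]
  {m : ℕ} {E : Fin m → Type*} [∀ j, NormedAddCommGroup (E j)] [∀ j, NormedSpace ℝ (E j)]
  (ι : ∀ j, E j →L[ℝ] 𝒜)

lemma Kfun_nonneg {t : Fin m → ℝ} (ht : ∀ j, 0 ≤ t j) (a : 𝒜) : 0 ≤ Kfun ι t a := by
  apply Real.sInf_nonneg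
  rintro x ⟨v, -, rfl⟩
  exact Finset.sum_nonneg fun j _ => mul_nonneg (ht j) (norm_nonneg _)

lemma Kfun_mono {t t' : Fin m → ℝ} (ht : ∀ j, 0 ≤ t j) (h : ∀ j, t j ≤ t' j) {a : 𝒜}
    (ha : ∃ v : ∀ j, E j, a = ∑ j, ι j (v j)) : Kfun ι t a ≤ Kfun ι t' a := by
  obtain ⟨v₀, hv₀⟩ := ha
  show sInf {x : ℝ | ∃ v : ∀ j, E j, a = ∑ j, ι j (v j) ∧ x = ∑ j, t j * ‖v j‖}
    ≤ sInf {x : ℝ | ∃ v : ∀ j, E j, a = ∑ j, ι j (v j) ∧ x = ∑ j, t' j * ‖v j‖}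
  refine le_csInf ⟨∑ j, t' j * ‖v₀ j‖, ⟨v₀, hv₀, rfl⟩⟩ ?_
  rintro b ⟨v, hv, rfl⟩
  refine le_trans (csInf_le ⟨0, ?_⟩ ⟨v, hv, rfl⟩) ?_
  · rintro x ⟨w, -, rfl⟩
    exact Finset.sum_nonneg fun j _ => mul_nonneg (ht j) (norm_nonneg _)
  · exact Finset.sum_le_sum fun j _ => mul_le_mul_of_nonneg_right (h j) (norm_nonneg _)

end KfunLemmas

/-- the one-dimensional measure `du/u` on `(0,∞)`. -/
noncomputable def nuH : Measure ℝ :=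
  (volume.restrict (Ioi (0:ℝ))).withDensity fun u => ENNReal.ofReal u⁻¹

instance : SigmaFinite nuH :=
  SigmaFinite.withDensity_of_ne_top (ae_of_all _ fun _ => ENNReal.ofReal_ne_top)

lemma nuH_apply {A : Set ℝ} (hA : MeasurableSet A) :
    nuH A = ∫⁻ u in A ∩ Ioi 0, ENNReal.ofReal u⁻¹ := by
  rw [nuH, withDensity_apply _ hA, Measure.restrict_restrict hA]

lemma nuH_scale {c : ℝ} (hc : 0 < c) : MeasurePreserving (fun u => c * u) nuH nuH := by
  refine ⟨measurable_const_mul c, ?_⟩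
  ext A hA
  rw [Measure.map_apply (measurable_const_mul c) hA,
    nuH_apply ((measurable_const_mul c) hA), nuH_apply hA]
  have hpre : (fun u => c * u) ⁻¹' (A ∩ Ioi 0) = ((fun u => c * u) ⁻¹' A) ∩ Ioi 0 := by
    rw [preimage_inter]
    congr 1
    ext u
    simp only [mem_preimage, mem_Ioi]
    exact mul_pos_iff_of_pos_left hc
  have h1 : ∫⁻ u in A ∩ Ioi 0, ENNReal.ofReal u⁻¹ ∂(Measure.map (fun u => c * u) volume)
      = ENNReal.ofReal c⁻¹ * ∫⁻ u in A ∩ Ioi 0, ENNReal.ofReal u⁻¹ := by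
    rw [Real.map_volume_mul_left hc.ne', abs_of_nonneg (inv_nonneg.mpr hc.le),
      Measure.restrict_smul, lintegral_smul_measure, smul_eq_mul]
  have h2 : ∫⁻ u in A ∩ Ioi 0, ENNReal.ofReal u⁻¹ ∂(Measure.map (fun u => c * u) volume)
      = ENNReal.ofReal c⁻¹ * ∫⁻ u in (fun u => c * u) ⁻¹' A ∩ Ioi 0, ENNReal.ofReal u⁻¹ := by
    rw [setLIntegral_map (hA.inter measurableSet_Ioi)
      (measurable_inv.ennreal_ofReal : Measurable fun u : ℝ => ENNReal.ofReal u⁻¹)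
      (measurable_const_mul c), hpre]
    simp_rw [mul_inv, ENNReal.ofReal_mul (inv_nonneg.mpr hc.le)]
    rw [lintegral_const_mul' _ _ ENNReal.ofReal_ne_top]
  have h3 := h1.symm.trans h2
  have hne : ENNReal.ofReal c⁻¹ ≠ 0 := (ENNReal.ofReal_pos.mpr (inv_pos.mpr hc)).ne'
  have h5 := congrArg (fun z => (ENNReal.ofReal c⁻¹)⁻¹ * z) h3
  simp only [← mul_assoc, ENNReal.inv_mul_cancel hne ENNReal.ofReal_ne_top, one_mul] at h5
  exact h5.symm

lemma lintegral_pi_prod : ∀ {n : ℕ} (g : Fin n → ℝ → ℝ≥0∞), (∀ j, Measurable (g j)) →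
    ∫⁻ t : Fin n → ℝ, ∏ j, g j (t j) ∂(Measure.pi fun _ => (volume : Measure ℝ))
      = ∏ j, ∫⁻ u, g j u := by
  intro n
  induction n with
  | zero =>
    intro g hg
    simp [lintegral_const]
  | succ n ih =>
    intro g hg
    have A := measurePreserving_piFinSuccAbove (fun _ : Fin (n+1) => (volume : Measure ℝ)) 0
    have key : ∫⁻ t : Fin (n+1) → ℝ, ∏ j, g j (t j) ∂(Measure.pi fun _ => volume)
        = ∫⁻ x : ℝ × (Fin n → ℝ), g 0 x.1 * ∏ j, g j.succ (x.2 j)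
            ∂((volume : Measure ℝ).prod (Measure.pi fun _ => volume)) := by
      rw [← A.map_eq, lintegral_map_equiv]
      refine lintegral_congr fun t => ?_
      rw [Fin.prod_univ_succ]
      simp [MeasurableEquiv.piFinSuccAbove_apply, Fin.zero_succAbove, Fin.tail]
    have hmeas : Measurable fun y : Fin n → ℝ => ∏ j, g j.succ (y j) :=
      Finset.measurable_prod _ fun j _ => (hg j.succ).comp (measurable_pi_apply j)
    have h2 := lintegral_prod_mul (μ := (volume : Measure ℝ))
      (ν := Measure.pi fun _ : Fin n => (volume : Measure ℝ)) (f := g 0)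
      (g := fun y : Fin n → ℝ => ∏ j, g j.succ (y j)) (hg 0).aemeasurable hmeas.aemeasurable
    rw [key, h2, ih (fun j => g j.succ) (fun j => hg j.succ), Fin.prod_univ_succ]

lemma haar_eq_pi (n : ℕ) : haarMeas n = Measure.pi fun _ => nuH := by
  symm
  apply Measure.pi_eq
  intro A hA
  have hPset : {t : Fin n → ℝ | ∀ j, 0 < t j} = Set.pi univ fun _ => Ioi (0:ℝ) := by
    ext t; simp [Set.mem_pi]
  have hApi : MeasurableSet (Set.pi univ A) := MeasurableSet.univ_pi hA
  rw [haarMeas, withDensity_apply _ hApi, hPset, Measure.restrict_restrict hApi,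
    ← Set.pi_inter_distrib]
  have hstep : ∫⁻ t in Set.pi univ (fun j => A j ∩ Ioi 0), ENNReal.ofReal (∏ j, (t j)⁻¹)
      ∂(Measure.pi fun _ => volume)
      = ∫⁻ t : Fin n → ℝ, ∏ j, ((A j ∩ Ioi 0).indicator fun u => ENNReal.ofReal u⁻¹) (t j)
      ∂(Measure.pi fun _ => volume) := by
    rw [← lintegral_indicator (MeasurableSet.univ_pi fun j => (hA j).inter measurableSet_Ioi)]
    refine lintegral_congr fun t => ?_
    by_cases h : ∀ j, t j ∈ A j ∩ Ioi 0
    · rw [indicator_of_mem (by simpa [Set.mem_pi] using h)]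
      rw [ENNReal.ofReal_prod_of_nonneg (fun j _ => inv_nonneg.mpr (h j).2.le)]
      exact Finset.prod_congr rfl fun j _ => (indicator_of_mem (h j) (fun u => ENNReal.ofReal u⁻¹)).symm
    · rw [not_forall] at h
      obtain ⟨j0, hj0⟩ := h
      have hnm : t ∉ Set.pi univ (fun j => A j ∩ Ioi 0) := fun hmem => hj0 (hmem j0 (mem_univ j0))
      rw [indicator_of_notMem hnm]
      exact (Finset.prod_eq_zero (Finset.mem_univ j0) (indicator_of_notMem hj0 _)).symm
  rw [hstep, lintegral_pi_prod
    (fun j => (A j ∩ Ioi 0).indicator fun u => ENNReal.ofReal u⁻¹)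
    (fun j => (measurable_inv.ennreal_ofReal).indicator ((hA j).inter measurableSet_Ioi))]
  refine Finset.prod_congr rfl fun j _ => ?_
  rw [nuH_apply (hA j), ← lintegral_indicator ((hA j).inter measurableSet_Ioi)]

lemma haar_scale {n : ℕ} {s : Fin n → ℝ} (hs : ∀ j, 0 < s j) :
    MeasurePreserving (fun (t : Fin n → ℝ) j => s j * t j) (haarMeas n) (haarMeas n) := by
  rw [haar_eq_pi]
  exact measurePreserving_pi _ _ fun j => nuH_scale (hs j)

end KMonoAux

theorem Kspace_monotone_in_p {𝒜 : Type*} [AddCommGroup 𝒜] [Module ℝ 𝒜]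
    [TopologicalSpace 𝒜] [IsTopologicalAddGroup 𝒜] [ContinuousSMul ℝ 𝒜] [T2Space 𝒜]
    {n : ℕ} (hn : 0 < n) {E : Fin (n + 1) → Type*} [∀ j, NormedAddCommGroup (E j)]
    [∀ j, NormedSpace ℝ (E j)] [∀ j, CompleteSpace (E j)]
    (ι : ∀ j, E j →L[ℝ] 𝒜)
    (φ : Fin n → ℝ → ℝ) (hB : ∀ j, IsBoyd (φ j))
    (hlow : ∀ j, 0 < lowerBoydIndex (φ j))
    (hup : ∀ j, upperBoydIndex (φ j) < 1)
    (p q : ℝ≥0∞) (hp : 1 ≤ p) (hpq : p ≤ q) :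
    ∃ C > (0:ℝ), ∀ a : 𝒜, (∃ v : ∀ j, E j, a = ∑ j, ι j (v j)) →
      Knorm ι φ q a ≤ ENNReal.ofReal C * Knorm ι φ p a := by
  classical
  by_cases hptop : p = ∞
  · subst hptop
    have hq : q = ∞ := top_le_iff.mp hpq
    subst hq
    exact ⟨1, one_pos, fun a _ => by simp⟩
  set μ := haarMeas n with hμ
  set F : 𝒜 → (Fin n → ℝ) → ℝ :=
    fun a t => Kfun ι (Fin.cons 1 t) a / ∏ j, φ j (t j) with hF
  have hKnorm : ∀ (e : ℝ≥0∞) (a : 𝒜), Knorm ι φ e a = eLpNorm (F a) e μ := fun _ _ => rfl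
  have hp0 : p ≠ 0 := (lt_of_lt_of_le zero_lt_one hp).ne'
  set r := p.toReal with hr
  have hr1 : 1 ≤ r := by
    rw [hr, ← ENNReal.toReal_one]
    exact ENNReal.toReal_mono hptop hp
  have hr0 : 0 < r := lt_of_lt_of_le one_pos hr1
  -- a.e. positivity of coordinates
  have hPmeas : MeasurableSet {t : Fin n → ℝ | ∀ j, 0 < t j} := by
    have heq : {t : Fin n → ℝ | ∀ j, 0 < t j} = ⋂ j, (fun t : Fin n → ℝ => t j) ⁻¹' Ioi 0 := by
      ext t; simp
    rw [heq]
    exact MeasurableSet.iInter fun j => (measurable_pi_apply j) measurableSet_Ioi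
  have haeP : ∀ᵐ t ∂μ, ∀ j, 0 < t j := by
    have h1 : ∀ᵐ t ∂(((Measure.pi fun _ => (volume : Measure ℝ)).restrict
        {t : Fin n → ℝ | ∀ j, 0 < t j})), ∀ j, 0 < t j := ae_restrict_mem hPmeas
    exact h1.filter_mono (withDensity_absolutelyContinuous _ _).ae_le
  -- nonnegativity of F on the positive orthant
  have hfnn : ∀ (a : 𝒜) (t : Fin n → ℝ), (∀ j, 0 < t j) → 0 ≤ F a t := by
    intro a t ht
    apply div_nonneg
    · apply Kfun_nonneg
      intro j
      refine Fin.cases ?_ ?_ j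
      · simp
      · intro i
        simpa using (ht i).le
    · exact Finset.prod_nonneg fun j _ => ((hB j).pos _ (ht j)).le
  -- the weights
  set g : Fin n → ℝ → ℝ≥0∞ := fun j v =>
    (Icc (1:ℝ) 2).indicator (fun v => (bbE (φ j) v)⁻¹ ^ r) v with hg
  have hgmeas : ∀ j, Measurable (g j) := fun j =>
    (((measurable_bbE (hB j)).inv.pow_const r).indicator measurableSet_Icc)
  have hgval : ∀ j (v : ℝ), v ∈ Icc (1:ℝ) 2 →
      g j v = (ENNReal.ofReal (boydBar (φ j) v))⁻¹ ^ r := by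
    intro j v hv
    rw [hg]
    simp only
    rw [indicator_of_mem hv, bbE_eq (hB j) (lt_of_lt_of_le one_pos hv.1)]
  have hgne : ∀ j (v : ℝ), v ∈ Icc (1:ℝ) 2 → g j v ≠ 0 := by
    intro j v hv
    rw [hgval j v hv]
    refine (ENNReal.rpow_pos ?_ ?_).ne'
    · exact ENNReal.inv_pos.mpr ENNReal.ofReal_ne_top
    · rw [Ne, ENNReal.inv_eq_top]
      exact (ENNReal.ofReal_pos.mpr
        ((hB j).boydBar_pos (lt_of_lt_of_le one_pos hv.1))).ne'
  set c0 : ℝ≥0∞ := ∫⁻ t, ∏ j, g j (t j) ∂μ with hc0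
  have hprodmeas : Measurable fun t : Fin n → ℝ => ∏ j, g j (t j) :=
    Finset.measurable_prod _ fun j _ => (hgmeas j).comp (measurable_pi_apply j)
  have hc0pos : 0 < c0 := by
    rw [hc0, lintegral_pos_iff_support hprodmeas]
    have hsub : (Set.pi univ fun _ : Fin n => Icc (1:ℝ) 2) ⊆
        Function.support fun t : Fin n → ℝ => ∏ j, g j (t j) := by
      intro t ht
      simp only [Function.mem_support]
      exact Finset.prod_ne_zero_iff.mpr fun j _ => hgne j (t j) (ht j (mem_univ j))
    refine lt_of_lt_of_le ?_ (measure_mono hsub)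
    rw [hμ, haar_eq_pi n, Measure.pi_pi]
    have hnu : 0 < nuH (Icc (1:ℝ) 2) := by
      have hIccIoi : Icc (1:ℝ) 2 ∩ Ioi 0 = Icc 1 2 :=
        inter_eq_left.mpr fun u hu => lt_of_lt_of_le one_pos hu.1
      rw [nuH_apply measurableSet_Icc, hIccIoi]
      have hlow2 : ENNReal.ofReal 2⁻¹ * volume (Icc (1:ℝ) 2)
          ≤ ∫⁻ u in Icc (1:ℝ) 2, ENNReal.ofReal u⁻¹ := by
        rw [← setLIntegral_const]
        apply setLIntegral_mono measurable_inv.ennreal_ofReal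
        intro u hu
        exact ENNReal.ofReal_le_ofReal
          (inv_anti₀ (lt_of_lt_of_le one_pos hu.1) hu.2)
      refine lt_of_lt_of_le ?_ hlow2
      have hv2 : volume (Icc (1:ℝ) 2) = 1 := by
        rw [Real.volume_Icc]; norm_num
      rw [hv2, mul_one]
      exact ENNReal.ofReal_pos.mpr (by norm_num)
    rw [Finset.prod_const]
    exact ENNReal.pow_pos hnu _
  -- the key estimate
  have key : ∀ a : 𝒜, (∃ v : ∀ j, E j, a = ∑ j, ι j (v j)) →
      ∀ s : Fin n → ℝ, (∀ j, 0 < s j) →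
      ENNReal.ofReal (F a s) ^ r * c0 ≤ ∫⁻ t, ENNReal.ofReal (F a t) ^ r ∂μ := by
    intro a ha s hs
    have hmp := haar_scale hs
    have hHmeas : Measurable fun t : Fin n → ℝ => ∏ j, g j (t j / s j) :=
      Finset.measurable_prod _ fun j _ =>
        (hgmeas j).comp (by fun_prop : Measurable fun t : Fin n → ℝ => t j / s j)
    have hcv : c0 = ∫⁻ t, ∏ j, g j (t j / s j) ∂μ := by
      calc c0 = ∫⁻ t, ∏ j, g j ((s j * t j) / s j) ∂μ := by
            rw [hc0]
            refine lintegral_congr fun t => Finset.prod_congr rfl fun j _ => ?_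
            rw [mul_div_cancel_left₀ _ (hs j).ne']
        _ = ∫⁻ t, ∏ j, g j (t j / s j) ∂(Measure.map (fun (t : Fin n → ℝ) j => s j * t j) μ) :=
            (lintegral_map hHmeas hmp.measurable).symm
        _ = ∫⁻ t, ∏ j, g j (t j / s j) ∂μ := by rw [hmp.map_eq]
    have hpt : ∀ᵐ t ∂μ,
        ENNReal.ofReal (F a s) ^ r * ∏ j, g j (t j / s j) ≤ ENNReal.ofReal (F a t) ^ r := by
      filter_upwards [haeP] with t ht
      by_cases hgood : ∀ j, t j / s j ∈ Icc (1:ℝ) 2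
      · -- the analytic estimate
        have hbpos : ∀ j, 0 < boydBar (φ j) (t j / s j) := fun j =>
          (hB j).boydBar_pos (lt_of_lt_of_le one_pos (hgood j).1)
        have hreal : F a s * ∏ j, (boydBar (φ j) (t j / s j))⁻¹ ≤ F a t := by
          have hK : Kfun ι (Fin.cons 1 s) a ≤ Kfun ι (Fin.cons 1 t) a := by
            refine Kfun_mono ι ?_ ?_ ha
            · intro j
              refine Fin.cases ?_ ?_ j
              · simp
              · intro i; simpa using (hs i).le
            · intro j
              refine Fin.cases ?_ ?_ j
              · simp
              · intro i
                simp only [Fin.cons_succ]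
                have h1 := (hgood i).1
                rw [le_div_iff₀ (hs i)] at h1
                linarith
          have hφle : ∀ j, φ j (t j) ≤ boydBar (φ j) (t j / s j) * φ j (s j) := by
            intro j
            have h1 : t j = (t j / s j) * s j := (div_mul_cancel₀ _ (hs j).ne').symm
            calc φ j (t j) = φ j ((t j / s j) * s j) := by rw [← h1]
              _ ≤ boydBar (φ j) (t j / s j) * φ j (s j) :=
                (hB j).phi_le (lt_of_lt_of_le one_pos (hgood j).1) (hs j)
          have hPt : 0 < ∏ j, φ j (t j) :=
            Finset.prod_pos fun j _ => (hB j).pos _ (ht j)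
          have hPs : 0 < ∏ j, φ j (s j) :=
            Finset.prod_pos fun j _ => (hB j).pos _ (hs j)
          have hBb : 0 < ∏ j, boydBar (φ j) (t j / s j) :=
            Finset.prod_pos fun j _ => hbpos j
          have hKs : 0 ≤ Kfun ι (Fin.cons 1 s) a := by
            apply Kfun_nonneg
            intro j
            refine Fin.cases ?_ ?_ j
            · simp
            · intro i; simpa using (hs i).le
          have hprodle : ∏ j, φ j (t j) ≤
              (∏ j, boydBar (φ j) (t j / s j)) * ∏ j, φ j (s j) := by
            rw [← Finset.prod_mul_distrib]
            exact Finset.prod_le_prod (fun j _ => ((hB j).pos _ (ht j)).le)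
              (fun j _ => hφle j)
          have hprodle' : ∏ j, φ j (t j) ≤
              (∏ j, φ j (s j)) * ∏ j, boydBar (φ j) (t j / s j) := by
            rw [mul_comm]; exact hprodle
          simp only [hF]
          rw [Finset.prod_inv_distrib, ← div_eq_mul_inv, div_div]
          exact div_le_div₀ (hKs.trans hK) hK hPt hprodle'
        -- pass to `ℝ≥0∞`
        have hgj : ∀ j, g j (t j / s j)
            = (ENNReal.ofReal (boydBar (φ j) (t j / s j)))⁻¹ ^ r :=
          fun j => hgval j _ (hgood j)
        calc ENNReal.ofReal (F a s) ^ r * ∏ j, g j (t j / s j)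
            = ENNReal.ofReal (F a s) ^ r
              * ∏ j, (ENNReal.ofReal ((boydBar (φ j) (t j / s j))⁻¹)) ^ r := by
              congr 1
              refine Finset.prod_congr rfl fun j _ => ?_
              rw [hgj j, ENNReal.ofReal_inv_of_pos (hbpos j)]
          _ = (ENNReal.ofReal (F a s)
              * ∏ j, ENNReal.ofReal ((boydBar (φ j) (t j / s j))⁻¹)) ^ r := by
              rw [ENNReal.prod_rpow_of_nonneg hr0.le,
                ← ENNReal.mul_rpow_of_nonneg _ _ hr0.le]
          _ = (ENNReal.ofReal (F a s * ∏ j, (boydBar (φ j) (t j / s j))⁻¹)) ^ r := by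
              rw [← ENNReal.ofReal_prod_of_nonneg
                (fun j _ => inv_nonneg.mpr (hbpos j).le),
                ← ENNReal.ofReal_mul (hfnn a s hs)]
          _ ≤ ENNReal.ofReal (F a t) ^ r :=
              ENNReal.rpow_le_rpow (ENNReal.ofReal_le_ofReal hreal) hr0.le
      · obtain ⟨j0, hj0⟩ := not_forall.mp hgood
        rw [Finset.prod_eq_zero (Finset.mem_univ j0) (indicator_of_notMem hj0 _), mul_zero]
        exact zero_le
    calc ENNReal.ofReal (F a s) ^ r * c0
        = ∫⁻ t, ENNReal.ofReal (F a s) ^ r * ∏ j, g j (t j / s j) ∂μ := by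
          rw [hcv, lintegral_const_mul' _ _
            (ENNReal.rpow_ne_top_of_nonneg hr0.le ENNReal.ofReal_ne_top)]
      _ ≤ ∫⁻ t, ENNReal.ofReal (F a t) ^ r ∂μ := lintegral_mono_ae hpt
  -- eLpNorm formulas
  have hIeq : ∀ (e : ℝ≥0∞), e ≠ 0 → e ≠ ∞ → ∀ a : 𝒜,
      eLpNorm (F a) e μ = (∫⁻ t, ENNReal.ofReal (F a t) ^ e.toReal ∂μ) ^ (1 / e.toReal) := by
    intro e he0 het a
    rw [eLpNorm_eq_lintegral_rpow_enorm_toReal he0 het]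
    congr 1
    apply lintegral_congr_ae
    filter_upwards [haeP] with t ht
    rw [Real.enorm_eq_ofReal (hfnn a t ht)]
  set K : ℝ≥0∞ := c0⁻¹ ^ (1/r) with hK
  have hKfin : K ≠ ⊤ :=
    ENNReal.rpow_ne_top_of_nonneg (one_div_pos.mpr hr0).le
      (ENNReal.inv_ne_top.mpr hc0pos.ne')
  set K1 : ℝ≥0∞ := max 1 K with hK1
  have hK1fin : K1 ≠ ⊤ := by
    rw [hK1, ← lt_top_iff_ne_top]
    exact max_lt ENNReal.one_lt_top hKfin.lt_top
  have hK1ne0 : K1 ≠ 0 := (lt_of_lt_of_le one_pos (le_max_left 1 K)).ne'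
  refine ⟨K1.toReal + 1, by positivity, fun a ha => ?_⟩
  have hK1C : K1 ≤ ENNReal.ofReal (K1.toReal + 1) := by
    calc K1 = ENNReal.ofReal K1.toReal := (ENNReal.ofReal_toReal hK1fin).symm
      _ ≤ _ := ENNReal.ofReal_le_ofReal (by linarith [ENNReal.toReal_nonneg (a := K1)])
  have main : eLpNorm (F a) q μ ≤ K1 * eLpNorm (F a) p μ := by
    set Ia := ∫⁻ t, ENNReal.ofReal (F a t) ^ r ∂μ with hIa
    by_cases hItop : Ia = ⊤
    · have htp : eLpNorm (F a) p μ = ⊤ := by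
        rw [hIeq p hp0 hptop a, ← hr, ← hIa, hItop,
          ENNReal.top_rpow_of_pos (one_div_pos.mpr hr0)]
      rw [htp, ENNReal.mul_top hK1ne0]
      exact le_top
    · have hNp : eLpNorm (F a) p μ = Ia ^ (1/r) := by
        rw [hIeq p hp0 hptop a, ← hr, ← hIa]
      have hMb : ∀ s : Fin n → ℝ, (∀ j, 0 < s j) →
          ENNReal.ofReal (F a s) ≤ (Ia / c0) ^ (1/r) := by
        intro s hs
        have h1 : ENNReal.ofReal (F a s) ^ r ≤ Ia / c0 := by
          rw [ENNReal.le_div_iff_mul_le (Or.inl hc0pos.ne') (Or.inr hItop)]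
          exact key a ha s hs
        calc ENNReal.ofReal (F a s) = (ENNReal.ofReal (F a s) ^ r) ^ (1/r) := by
              rw [← ENNReal.rpow_mul, mul_one_div_cancel hr0.ne', ENNReal.rpow_one]
          _ ≤ (Ia / c0) ^ (1/r) :=
              ENNReal.rpow_le_rpow h1 (one_div_pos.mpr hr0).le
      have hMle : (Ia / c0) ^ (1/r) = Ia ^ (1/r) * K := by
        rw [div_eq_mul_inv, ENNReal.mul_rpow_of_nonneg _ _ (one_div_pos.mpr hr0).le, hK]
      by_cases hqtop : q = ∞
      · subst hqtop
        rw [eLpNorm_exponent_top, eLpNormEssSup]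
        have hess : essSup (fun t => ‖F a t‖ₑ) μ ≤ (Ia/c0) ^ (1/r) := by
          refine essSup_le_of_ae_le _ ?_
          filter_upwards [haeP] with t ht
          rw [Real.enorm_eq_ofReal (hfnn a t ht)]
          exact hMb t ht
        calc essSup (fun t => ‖F a t‖ₑ) μ ≤ (Ia/c0) ^ (1/r) := hess
          _ = Ia ^ (1/r) * K := hMle
          _ ≤ Ia ^ (1/r) * K1 := mul_le_mul_right (le_max_right 1 K) _
          _ = K1 * eLpNorm (F a) p μ := by rw [hNp, mul_comm]
      · have hq0 : q ≠ 0 := (lt_of_lt_of_le zero_lt_one (hp.trans hpq)).ne'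
        set rq := q.toReal with hrq
        have hrq0 : 0 < rq := ENNReal.toReal_pos hq0 hqtop
        have hrle : r ≤ rq := by
          rw [hr, hrq]
          exact (ENNReal.toReal_le_toReal hptop hqtop).mpr hpq
        set M := (Ia / c0) ^ (1/r) with hM
        have hMfin : M ≠ ⊤ := by
          rw [hM]
          apply ENNReal.rpow_ne_top_of_nonneg (one_div_pos.mpr hr0).le
          rw [Ne, ENNReal.div_eq_top]
          rintro (⟨-, h2⟩ | ⟨h1, -⟩)
          · exact hc0pos.ne' h2
          · exact hItop h1
        have hIq : ∫⁻ t, ENNReal.ofReal (F a t) ^ rq ∂μ ≤ Ia * M ^ (rq - r) := by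
          have hptw : ∀ᵐ t ∂μ, ENNReal.ofReal (F a t) ^ rq
              ≤ ENNReal.ofReal (F a t) ^ r * M ^ (rq - r) := by
            filter_upwards [haeP] with t ht
            have h1 : ENNReal.ofReal (F a t) ^ rq
                = ENNReal.ofReal (F a t) ^ r * ENNReal.ofReal (F a t) ^ (rq - r) := by
              rw [← ENNReal.rpow_add_of_nonneg _ _ hr0.le (by linarith)]
              congr 1
              ring
            rw [h1]
            exact mul_le_mul_right
              (ENNReal.rpow_le_rpow (hMb t ht) (by linarith)) _
          calc ∫⁻ t, ENNReal.ofReal (F a t) ^ rq ∂μ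
              ≤ ∫⁻ t, ENNReal.ofReal (F a t) ^ r * M ^ (rq - r) ∂μ :=
                lintegral_mono_ae hptw
            _ = Ia * M ^ (rq - r) := by
                rw [lintegral_mul_const' _ _
                  (ENNReal.rpow_ne_top_of_nonneg (by linarith) hMfin), hIa]
        have hNq : eLpNorm (F a) q μ = (∫⁻ t, ENNReal.ofReal (F a t) ^ rq ∂μ) ^ (1/rq) := by
          rw [hIeq q hq0 hqtop a, ← hrq]
        set θ := (rq - r)/rq with hθ
        have hθ0 : 0 ≤ θ := div_nonneg (by linarith) hrq0.le
        have hθ1 : θ ≤ 1 := by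
          rw [hθ, div_le_one hrq0]
          linarith
        calc eLpNorm (F a) q μ
            = (∫⁻ t, ENNReal.ofReal (F a t) ^ rq ∂μ) ^ (1/rq) := hNq
          _ ≤ (Ia * M ^ (rq - r)) ^ (1/rq) :=
              ENNReal.rpow_le_rpow hIq (one_div_pos.mpr hrq0).le
          _ = Ia ^ (1/rq) * M ^ θ := by
              rw [ENNReal.mul_rpow_of_nonneg _ _ (one_div_pos.mpr hrq0).le,
                ← ENNReal.rpow_mul, hθ]
              congr 2
              field_simp
          _ = Ia ^ (1/rq) * (Ia ^ (1/r) * K) ^ θ := by rw [hMle]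
          _ = Ia ^ (1/rq) * (Ia ^ ((1/r) * θ) * K ^ θ) := by
              rw [ENNReal.mul_rpow_of_nonneg _ _ hθ0, ← ENNReal.rpow_mul]
          _ = (Ia ^ (1/rq) * Ia ^ ((1/r) * θ)) * K ^ θ := by ring
          _ = Ia ^ (1/r) * K ^ θ := by
              rw [← ENNReal.rpow_add_of_nonneg _ _ (one_div_pos.mpr hrq0).le
                (mul_nonneg (one_div_pos.mpr hr0).le hθ0)]
              congr 2
              rw [hθ]
              field_simp
              ring
          _ ≤ Ia ^ (1/r) * K1 := by
              apply mul_le_mul_right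
              rcases le_total K 1 with hKle | hKge
              · exact le_trans (ENNReal.rpow_le_one hKle hθ0) (le_max_left 1 K)
              · calc K ^ θ ≤ K ^ (1:ℝ) :=
                    ENNReal.rpow_le_rpow_of_exponent_le hKge hθ1
                  _ = K := ENNReal.rpow_one K
                  _ ≤ K1 := le_max_right 1 K
          _ = K1 * eLpNorm (F a) p μ := by rw [hNp, mul_comm]
  calc Knorm ι φ q a = eLpNorm (F a) q μ := hKnorm q a
    _ ≤ K1 * eLpNorm (F a) p μ := main
    _ ≤ ENNReal.ofReal (K1.toReal + 1) * eLpNorm (F a) p μ := mul_le_mul_left hK1C _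
    _ = ENNReal.ofReal (K1.toReal + 1) * Knorm ι φ p a := by rw [hKnorm p a]
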